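/- arXiv:1504.07043 — 4 statements merged into one kernel-verified Lean document; each statement's English description precedes it below -/
import Mathlib

section
/- Let (X, μ) be a σ-finite measure space and A a sublinear operator defined on simple functions with values in measurable functions on another σ-finite measure space (Γ, ν). Suppose A is of weak type (p₁,p₁) with constant M₁ and of weak type (p₂,p₂) with constant M₂, where 1 ≤ p₁ < p₂ < ∞; i.e. ν{|Af| > y} ≤ (Mᵢ‖f‖_{pᵢ}/y)^{pᵢ} for all y > 0 and i = 1,2. Then for every p with p₁ < p < p₂, A is of strong type (p,p): ‖Af‖_{L^p(Γ,ν)} ≤ C·M₁^{1−θ}·M₂^{θ}·‖f‖_{L^p(X,μ)}, where 1/p = (1−θ)/p₁ + θ/p₂ and C depends only on p, p₁, p₂. -/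
/-!
For a level `t > 0`, split `f` at height `σ t` into its large part `f · 1_{‖f‖ > σ t}` and its
small part `f · 1_{‖f‖ ≤ σ t}`. Subadditivity gives `{‖A f‖ > t} ⊆ {‖A f₁‖ > t/2} ∪ {‖A f₂‖ > t/2}`,
and the two weak type bounds estimate these sets by `t^{-p₁} ∫ ‖f₁‖^{p₁}` and `t^{-p₂} ∫ ‖f₂‖^{p₂}`.
Integrating against `p t^{p-1} dt` (layer cake) and exchanging the integrals, the `t`-integrals
`∫₀^{‖f‖/σ} t^{p-1-p₁}` and `∫_{‖f‖/σ}^∞ t^{p-1-p₂}` converge precisely because `p₁ < p < p₂`,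
and each is a multiple of `‖f‖^{p - pᵢ}`. Choosing `σ` to balance the two terms turns both
multiples into `(2 M₁^{1-θ} M₂^θ)^p`.
-/

open MeasureTheory ENNReal Set

lemma setLIntegral_Ioo_rpow {r a : ℝ} (hr : -1 < r) (ha : 0 ≤ a) :
    ∫⁻ t in Ioo 0 a, ENNReal.ofReal (t ^ r) = ENNReal.ofReal (a ^ (r + 1) / (r + 1)) := by
  have hint : IntegrableOn (fun t : ℝ => t ^ r) (Ioo 0 a) :=
    (intervalIntegral.intervalIntegrable_rpow' hr).1.mono_set Ioo_subset_Ioc_self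
  rw [← ofReal_integral_eq_lintegral_ofReal hint, ← integral_Ioc_eq_integral_Ioo,
    ← intervalIntegral.integral_of_le ha, integral_rpow (Or.inl hr),
    Real.zero_rpow (by linarith), sub_zero]
  filter_upwards [self_mem_ae_restrict measurableSet_Ioo] with t ht
  exact Real.rpow_nonneg ht.1.le r

lemma setLIntegral_Ioi_rpow {r a : ℝ} (hr : r < -1) (ha : 0 < a) :
    ∫⁻ t in Ioi a, ENNReal.ofReal (t ^ r) = ENNReal.ofReal (a ^ (r + 1) / -(r + 1)) := by
  rw [← ofReal_integral_eq_lintegral_ofReal (integrableOn_Ioi_rpow_of_lt hr ha),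
    integral_Ioi_rpow_of_lt hr ha, div_neg, neg_div]
  filter_upwards [self_mem_ae_restrict measurableSet_Ioi] with t ht
  exact Real.rpow_nonneg (ha.trans ht).le r

lemma div_rpow_sub_mul_rpow {b σ p q : ℝ} (hb : 0 ≤ b) (hσ : 0 < σ) (hpq : p ≠ q) (hp : p ≠ 0) :
    (b / σ) ^ (p - q) * b ^ q = σ ^ (q - p) * b ^ p := by
  rcases hb.eq_or_lt with rfl | hb
  · rw [zero_div, Real.zero_rpow (sub_ne_zero.2 hpq), Real.zero_rpow hp, zero_mul, mul_zero]
  · rw [Real.div_rpow hb.le hσ.le, div_mul_eq_mul_div, ← Real.rpow_add hb, sub_add_cancel,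
      show q - p = -(p - q) by ring, Real.rpow_neg hσ.le, div_eq_inv_mul]

lemma setLIntegral_rpow_mul_ite_lt {σ p q b : ℝ} (hσ : 0 < σ) (hp : 0 < p) (hqp : q < p)
    (hb : 0 ≤ b) :
    ∫⁻ t in Ioi 0, ENNReal.ofReal (t ^ (p - 1 - q)) *
        (if σ * t < b then ENNReal.ofReal (b ^ q) else 0) =
      ENNReal.ofReal (σ ^ (q - p) / (p - q)) * ENNReal.ofReal (b ^ p) := by
  have hind : (fun t : ℝ => ENNReal.ofReal (t ^ (p - 1 - q)) *
      (if σ * t < b then ENNReal.ofReal (b ^ q) else 0)) =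
      (Iio (b / σ)).indicator
        fun t => ENNReal.ofReal (t ^ (p - 1 - q)) * ENNReal.ofReal (b ^ q) := by
    ext t
    simp only [indicator_apply, mem_Iio, lt_div_iff₀' hσ, mul_ite, mul_zero]
  rw [hind, lintegral_indicator measurableSet_Iio, Measure.restrict_restrict measurableSet_Iio,
    Iio_inter_Ioi, lintegral_mul_const' _ _ ofReal_ne_top,
    setLIntegral_Ioo_rpow (by linarith) (div_nonneg hb hσ.le), show p - 1 - q + 1 = p - q by ring,
    ← ofReal_mul (div_nonneg (Real.rpow_nonneg (div_nonneg hb hσ.le) _) (by linarith)),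
    ← ofReal_mul (div_nonneg (Real.rpow_nonneg hσ.le _) (by linarith)), div_mul_eq_mul_div,
    div_rpow_sub_mul_rpow hb hσ hqp.ne' hp.ne', mul_div_right_comm]

lemma setLIntegral_rpow_mul_ite_le {σ p q b : ℝ} (hσ : 0 < σ) (hp : 0 < p) (hpq : p < q)
    (hb : 0 ≤ b) :
    ∫⁻ t in Ioi 0, ENNReal.ofReal (t ^ (p - 1 - q)) *
        (if σ * t < b then 0 else ENNReal.ofReal (b ^ q)) =
      ENNReal.ofReal (σ ^ (q - p) / (q - p)) * ENNReal.ofReal (b ^ p) := by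
  rcases hb.eq_or_lt with rfl | hb
  · simp [Real.zero_rpow (hp.trans hpq).ne', Real.zero_rpow hp.ne']
  have hind : (fun t : ℝ => ENNReal.ofReal (t ^ (p - 1 - q)) *
      (if σ * t < b then 0 else ENNReal.ofReal (b ^ q))) =
      (Ici (b / σ)).indicator
        fun t => ENNReal.ofReal (t ^ (p - 1 - q)) * ENNReal.ofReal (b ^ q) := by
    ext t
    simp only [indicator_apply, mem_Ici, div_le_iff₀' hσ, mul_ite, mul_zero, ← not_lt, ite_not]
  have hbσ : 0 < b / σ := div_pos hb hσ
  rw [hind, lintegral_indicator measurableSet_Ici, Measure.restrict_restrict measurableSet_Ici,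
    inter_eq_left.2 (Ici_subset_Ioi.2 hbσ), Measure.restrict_congr_set Ioi_ae_eq_Ici.symm,
    lintegral_mul_const' _ _ ofReal_ne_top, setLIntegral_Ioi_rpow (by linarith) hbσ,
    show p - 1 - q + 1 = p - q by ring, neg_sub,
    ← ofReal_mul (div_nonneg (Real.rpow_nonneg hbσ.le _) (by linarith)),
    ← ofReal_mul (div_nonneg (Real.rpow_nonneg hσ.le _) (by linarith)), div_mul_eq_mul_div,
    div_rpow_sub_mul_rpow hb.le hσ hpq.ne hp.ne', mul_div_right_comm]

lemma setLIntegral_Ioi_lintegral_comp_eq {α : Type*} [MeasurableSpace α] {μ : Measure α}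
    [SFinite μ] {F : ℝ → ℝ → ℝ≥0∞} (hF : Measurable (Function.uncurry F)) {g : α → ℝ}
    (hg : Measurable g) (hg0 : 0 ≤ g) {c : ℝ≥0∞} {p : ℝ}
    (hFc : ∀ b, 0 ≤ b → ∫⁻ t in Ioi 0, F t b = c * ENNReal.ofReal (b ^ p)) :
    ∫⁻ t in Ioi 0, ∫⁻ x, F t (g x) ∂μ = c * ∫⁻ x, ENNReal.ofReal (g x ^ p) ∂μ := by
  have hFg : Measurable fun z : ℝ × α => F z.1 (g z.2) :=
    hF.comp (measurable_fst.prodMk (hg.comp measurable_snd))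
  rw [lintegral_lintegral_swap hFg.aemeasurable,
    ← lintegral_const_mul _ (hg.pow_const p).ennreal_ofReal]
  exact lintegral_congr fun x => hFc _ (hg0 x)

lemma lintegral_rpow_le_lintegral_meas_lt_mul {β : Type*} [MeasurableSpace β] (ν : Measure β)
    {g : β → ℝ} (hg : 0 ≤ g) {p : ℝ} (hp : 0 < p) :
    ∫⁻ x, ENNReal.ofReal (g x ^ p) ∂ν ≤
      ENNReal.ofReal p * ∫⁻ t in Ioi 0, ν {x | t < g x} * ENNReal.ofReal (t ^ (p - 1)) := by
  -- `g` need not be measurable: pass to a measurable minorant with the same integral.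
  obtain ⟨h, hmeas, hle, heq⟩ :=
    exists_measurable_le_lintegral_eq ν fun x => ENNReal.ofReal (g x ^ p)
  set r : β → ℝ := fun x => (h x).toReal ^ p⁻¹
  have hr : ∀ x, ENNReal.ofReal (r x ^ p) = h x := fun x => by
    rw [← Real.rpow_mul toReal_nonneg, inv_mul_cancel₀ hp.ne', Real.rpow_one,
      ofReal_toReal (ne_top_of_le_ne_top ofReal_ne_top (hle x))]
  have hrg : ∀ x, r x ≤ g x := fun x => by
    rw [← Real.rpow_le_rpow_iff (Real.rpow_nonneg toReal_nonneg _) (hg x) hp,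
      ← ofReal_le_ofReal_iff (Real.rpow_nonneg (hg x) _), hr]
    exact hle x
  calc ∫⁻ x, ENNReal.ofReal (g x ^ p) ∂ν = ∫⁻ x, ENNReal.ofReal (r x ^ p) ∂ν := by
        simp_rw [heq, hr]
    _ = ENNReal.ofReal p * ∫⁻ t in Ioi 0, ν {x | t < r x} * ENNReal.ofReal (t ^ (p - 1)) :=
        lintegral_rpow_eq_lintegral_meas_lt_mul ν
          (.of_forall fun x => Real.rpow_nonneg toReal_nonneg _)
          (hmeas.ennreal_toReal.pow_const _).aemeasurable hp
    _ ≤ _ := by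
        gcongr with t x
        exact hrg x

lemma ofReal_div_rpow_mul_rpow {c t q r : ℝ} (hc : 0 ≤ c) (ht : 0 < t) :
    ENNReal.ofReal ((c / t) ^ q) * ENNReal.ofReal (t ^ r) =
      ENNReal.ofReal (c ^ q) * ENNReal.ofReal (t ^ (r - q)) := by
  rw [← ofReal_mul (Real.rpow_nonneg (div_nonneg hc ht.le) _),
    ← ofReal_mul (Real.rpow_nonneg hc _), Real.div_rpow hc ht.le, div_mul_eq_mul_div,
    mul_div_assoc, ← Real.rpow_sub ht]

lemma exists_rpow_mul_rpow_eq {a b p₁ p₂ p θ : ℝ} (ha : 0 < a) (hb : 0 < b) (hp₁ : p₁ ≠ 0)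
    (hp₂ : p₂ ≠ 0) (hp : p ≠ 0) (hp₁₂ : p₁ ≠ p₂) (hpθ : 1 / p = (1 - θ) / p₁ + θ / p₂) :
    ∃ σ > 0, a ^ p₁ * σ ^ (p₁ - p) = (a ^ (1 - θ) * b ^ θ) ^ p ∧
      b ^ p₂ * σ ^ (p₂ - p) = (a ^ (1 - θ) * b ^ θ) ^ p := by
  have hθ : p₁ * p₂ = p * ((1 - θ) * p₂ + θ * p₁) := by
    field_simp at hpθ
    linear_combination hpθ
  have h21 : p₂ - p₁ ≠ 0 := sub_ne_zero.2 hp₁₂.symm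
  -- pass to logarithms, where both equations are linear in `log σ`
  refine ⟨Real.exp ((p₁ * Real.log a - p₂ * Real.log b) / (p₂ - p₁)), Real.exp_pos _, ?_, ?_⟩ <;>
  · simp only [Real.rpow_def_of_pos ha, Real.rpow_def_of_pos hb, Real.rpow_def_of_pos
      (Real.exp_pos _), Real.log_exp, ← Real.exp_add, Real.exp_eq_exp]
    field_simp
    linear_combination (Real.log a - Real.log b) * hθ

-- `2` comes from splitting `t = t/2 + t/2`, the bracket from the two power integrals in `t`.
noncomputable def marcinkiewiczConst (p₁ p₂ p : ℝ) : ℝ :=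
  2 * (p * (1 / (p - p₁) + 1 / (p₂ - p))) ^ (1 / p)

lemma marcinkiewiczConst_pos {p₁ p₂ p : ℝ} (hp : 0 < p) (hp₁p : p₁ < p) (hpp₂ : p < p₂) :
    0 < marcinkiewiczConst p₁ p₂ p := by
  have hp₁ := sub_pos.2 hp₁p
  have hp₂ := sub_pos.2 hpp₂
  unfold marcinkiewiczConst
  positivity

section Interpolation

variable {α β E F : Type*} [MeasurableSpace α] [MeasurableSpace β]
  [NormedAddCommGroup E] [NormedAddCommGroup F] {μ : Measure α} {ν : Measure β}
  {A : SimpleFunc α E → β → F} {p₁ p₂ p θ M₁ M₂ : ℝ}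

def IsNormSubadditive (A : SimpleFunc α E → β → F) : Prop :=
  ∀ f g x, ‖A (f + g) x‖ ≤ ‖A f x‖ + ‖A g x‖

def HasWeakTypeSimple (A : SimpleFunc α E → β → F) (μ : Measure α) (ν : Measure β) (p M : ℝ) :
    Prop :=
  ∀ (f : SimpleFunc α E) (y : ℝ), 0 < y →
    ν {x | y < ‖A f x‖} ≤ (ENNReal.ofReal (M / y) * eLpNorm (⇑f) (ENNReal.ofReal p) μ) ^ p

lemma eLpNorm_ofReal_rpow {f : α → E} {p : ℝ} (hp : 0 < p) :
    eLpNorm f (ENNReal.ofReal p) μ ^ p = ∫⁻ x, ENNReal.ofReal (‖f x‖ ^ p) ∂μ := by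
  have := eLpNorm_nnreal_pow_eq_lintegral (μ := μ) (f := f) (Real.toNNReal_pos.2 hp).ne'
  rw [Real.coe_toNNReal _ hp.le] at this
  rw [ENNReal.ofReal, this]
  exact lintegral_congr fun x => by
    rw [← ofReal_norm, ofReal_rpow_of_nonneg (norm_nonneg _) hp.le]

lemma HasWeakTypeSimple.measure_lt_le {M : ℝ} (hw : HasWeakTypeSimple A μ ν p M) (hp : 0 < p)
    (hM : 0 ≤ M) (f : SimpleFunc α E) {y : ℝ} (hy : 0 < y) :
    ν {x | y < ‖A f x‖} ≤
      ENNReal.ofReal ((M / y) ^ p) * ∫⁻ x, ENNReal.ofReal (‖f x‖ ^ p) ∂μ := by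
  rw [← eLpNorm_ofReal_rpow hp, ← ofReal_rpow_of_nonneg (div_nonneg hM hy.le) hp.le,
    ← mul_rpow_of_nonneg _ _ hp.le]
  exact hw f y hy

lemma measure_lt_le_add_of_le_add {g g₁ g₂ : β → ℝ} (h : ∀ x, g x ≤ g₁ x + g₂ x) (t : ℝ) :
    ν {x | t < g x} ≤ ν {x | t / 2 < g₁ x} + ν {x | t / 2 < g₂ x} := by
  refine (measure_mono fun x (hx : t < g x) => ?_).trans (measure_union_le _ _)
  by_contra hc
  simp only [mem_union, mem_ofPred_eq, not_or, not_lt] at hc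
  linarith [h x]

lemma measure_lt_norm_le_of_truncation (hA : IsNormSubadditive A)
    (h₁ : HasWeakTypeSimple A μ ν p₁ M₁) (h₂ : HasWeakTypeSimple A μ ν p₂ M₂) (hp₁ : 0 < p₁)
    (hp₂ : 0 < p₂) (hM₁ : 0 ≤ M₁) (hM₂ : 0 ≤ M₂) (f : SimpleFunc α E) (s : ℝ) {t : ℝ} (ht : 0 < t) :
    ν {x | t < ‖A f x‖} ≤
      ENNReal.ofReal ((2 * M₁ / t) ^ p₁) *
          ∫⁻ x, (if s < ‖f x‖ then ENNReal.ofReal (‖f x‖ ^ p₁) else 0) ∂μ +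
        ENNReal.ofReal ((2 * M₂ / t) ^ p₂) *
          ∫⁻ x, (if s < ‖f x‖ then 0 else ENNReal.ofReal (‖f x‖ ^ p₂)) ∂μ := by
  have hS : MeasurableSet {x | s < ‖f x‖} :=
    measurableSet_lt measurable_const (f.map (‖·‖)).measurable
  set f₁ := f.piecewise _ hS 0
  set f₂ := f.piecewise _ hS.compl 0
  have hf : f₁ + f₂ = f := by
    ext x
    by_cases hx : s < ‖f x‖ <;> simp [f₁, f₂, hx]
  have h2t : ∀ M, M / (t / 2) = 2 * M / t := fun M => by rw [div_div_eq_mul_div, mul_comm]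
  calc ν {x | t < ‖A f x‖}
      ≤ ν {x | t / 2 < ‖A f₁ x‖} + ν {x | t / 2 < ‖A f₂ x‖} :=
        measure_lt_le_add_of_le_add (fun x => hf ▸ hA f₁ f₂ x) t
    _ ≤ _ := by
        gcongr
        · refine (h₁.measure_lt_le hp₁ hM₁ f₁ (half_pos ht)).trans_eq ?_
          rw [h2t]
          congr 1
          refine lintegral_congr fun x => ?_
          by_cases hx : s < ‖f x‖ <;> simp [f₁, hx, Real.zero_rpow hp₁.ne']
        · refine (h₂.measure_lt_le hp₂ hM₂ f₂ (half_pos ht)).trans_eq ?_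
          rw [h2t]
          congr 1
          refine lintegral_congr fun x => ?_
          by_cases hx : s < ‖f x‖ <;> simp [f₂, hx, Real.zero_rpow hp₂.ne']

theorem lintegral_rpow_le_of_hasWeakTypeSimple [SFinite μ] (hA : IsNormSubadditive A)
    (h₁ : HasWeakTypeSimple A μ ν p₁ M₁) (h₂ : HasWeakTypeSimple A μ ν p₂ M₂) (hp₁ : 0 < p₁)
    (hp₁p : p₁ < p) (hpp₂ : p < p₂) (hM₁ : 0 ≤ M₁) (hM₂ : 0 ≤ M₂) {σ : ℝ} (hσ : 0 < σ)
    (f : SimpleFunc α E) :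
    ∫⁻ x, ENNReal.ofReal (‖A f x‖ ^ p) ∂ν ≤
      ENNReal.ofReal (p * ((2 * M₁) ^ p₁ * (σ ^ (p₁ - p) / (p - p₁)) +
        (2 * M₂) ^ p₂ * (σ ^ (p₂ - p) / (p₂ - p)))) * ∫⁻ x, ENNReal.ofReal (‖f x‖ ^ p) ∂μ := by
  have hp : 0 < p := hp₁.trans hp₁p
  have hf : Measurable fun x => ‖f x‖ := (f.map (‖·‖)).measurable
  set F₁ : ℝ → ℝ → ℝ≥0∞ := fun t b =>
    ENNReal.ofReal (t ^ (p - 1 - p₁)) * if σ * t < b then ENNReal.ofReal (b ^ p₁) else 0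
  set F₂ : ℝ → ℝ → ℝ≥0∞ := fun t b =>
    ENNReal.ofReal (t ^ (p - 1 - p₂)) * if σ * t < b then 0 else ENNReal.ofReal (b ^ p₂)
  have hF₁ : Measurable (Function.uncurry F₁) := by
    refine (measurable_fst.pow_const _).ennreal_ofReal.mul (Measurable.ite ?_ ?_ measurable_const)
    · exact measurableSet_lt (measurable_fst.const_mul σ) measurable_snd
    · exact (measurable_snd.pow_const _).ennreal_ofReal
  have hF₂ : Measurable (Function.uncurry F₂) := by
    refine (measurable_fst.pow_const _).ennreal_ofReal.mul (Measurable.ite ?_ measurable_const ?_)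
    · exact measurableSet_lt (measurable_fst.const_mul σ) measurable_snd
    · exact (measurable_snd.pow_const _).ennreal_ofReal
  have hdist : ∀ t ∈ Ioi (0 : ℝ), ν {x | t < ‖A f x‖} * ENNReal.ofReal (t ^ (p - 1)) ≤
      ENNReal.ofReal ((2 * M₁) ^ p₁) * ∫⁻ x, F₁ t ‖f x‖ ∂μ +
        ENNReal.ofReal ((2 * M₂) ^ p₂) * ∫⁻ x, F₂ t ‖f x‖ ∂μ := fun t (ht : 0 < t) => by
    refine (mul_le_mul_left (measure_lt_norm_le_of_truncation hA h₁ h₂ hp₁ (hp.trans hpp₂)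
      hM₁ hM₂ f (σ * t) ht) _).trans_eq ?_
    simp only [F₁, F₂, lintegral_const_mul' _ _ ofReal_ne_top, add_mul]
    congr 1 <;> rw [mul_right_comm, ofReal_div_rpow_mul_rpow (by positivity) ht, mul_assoc]
  calc ∫⁻ x, ENNReal.ofReal (‖A f x‖ ^ p) ∂ν
      ≤ ENNReal.ofReal p * ∫⁻ t in Ioi 0, ν {x | t < ‖A f x‖} * ENNReal.ofReal (t ^ (p - 1)) :=
        lintegral_rpow_le_lintegral_meas_lt_mul ν (fun x => norm_nonneg _) hp
    _ ≤ ENNReal.ofReal p * ∫⁻ t in Ioi 0, (ENNReal.ofReal ((2 * M₁) ^ p₁) * ∫⁻ x, F₁ t ‖f x‖ ∂μ +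
          ENNReal.ofReal ((2 * M₂) ^ p₂) * ∫⁻ x, F₂ t ‖f x‖ ∂μ) := by
        gcongr ENNReal.ofReal p * ?_
        exact setLIntegral_mono' measurableSet_Ioi hdist
    _ = _ := by
        have hF₁f : Measurable fun t => ∫⁻ x, F₁ t ‖f x‖ ∂μ :=
          (hF₁.comp (measurable_fst.prodMk (hf.comp measurable_snd))).lintegral_prod_right'
        rw [lintegral_add_left (hF₁f.const_mul _),
          lintegral_const_mul' _ _ ofReal_ne_top, lintegral_const_mul' _ _ ofReal_ne_top,
          setLIntegral_Ioi_lintegral_comp_eq hF₁ hf (fun x => norm_nonneg _)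
            fun b hb => setLIntegral_rpow_mul_ite_lt hσ hp hp₁p hb,
          setLIntegral_Ioi_lintegral_comp_eq hF₂ hf (fun x => norm_nonneg _)
            fun b hb => setLIntegral_rpow_mul_ite_le hσ hp hpp₂ hb,
          ofReal_mul hp.le, ofReal_add (by positivity) (by positivity),
          ofReal_mul (by positivity), ofReal_mul (by positivity)]
        ring

theorem eLpNorm_le_of_hasWeakTypeSimple [SFinite μ] (hA : IsNormSubadditive A)
    (h₁ : HasWeakTypeSimple A μ ν p₁ M₁) (h₂ : HasWeakTypeSimple A μ ν p₂ M₂) (hp₁ : 0 < p₁)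
    (hp₁p : p₁ < p) (hpp₂ : p < p₂) (hpθ : 1 / p = (1 - θ) / p₁ + θ / p₂) (hM₁ : 0 < M₁)
    (hM₂ : 0 < M₂) (f : SimpleFunc α E) :
    eLpNorm (A f) (ENNReal.ofReal p) ν ≤
      ENNReal.ofReal (marcinkiewiczConst p₁ p₂ p * M₁ ^ (1 - θ) * M₂ ^ θ) *
        eLpNorm (⇑f) (ENNReal.ofReal p) μ := by
  have hp : 0 < p := hp₁.trans hp₁p
  obtain ⟨σ, hσ, hσ₁, hσ₂⟩ := exists_rpow_mul_rpow_eq (by positivity : 0 < 2 * M₁)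
    (by positivity : 0 < 2 * M₂) hp₁.ne' (hp.trans hpp₂).ne' hp.ne' (hp₁p.trans hpp₂).ne hpθ
  have hK : marcinkiewiczConst p₁ p₂ p * M₁ ^ (1 - θ) * M₂ ^ θ =
      (p * (1 / (p - p₁) + 1 / (p₂ - p))) ^ (1 / p) * ((2 * M₁) ^ (1 - θ) * (2 * M₂) ^ θ) := by
    rw [marcinkiewiczConst, Real.mul_rpow zero_le_two hM₁.le, Real.mul_rpow zero_le_two hM₂.le]
    have : (2 : ℝ) ^ (1 - θ) * 2 ^ θ = 2 := by
      rw [← Real.rpow_add two_pos, sub_add_cancel, Real.rpow_one]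
    linear_combination
      (p * (1 / (p - p₁) + 1 / (p₂ - p))) ^ (1 / p) * M₁ ^ (1 - θ) * M₂ ^ θ * this.symm
  rw [← ENNReal.rpow_le_rpow_iff hp, mul_rpow_of_nonneg _ _ hp.le, eLpNorm_ofReal_rpow hp,
    eLpNorm_ofReal_rpow hp, ofReal_rpow_of_nonneg (by rw [hK]; positivity) hp.le, hK,
    Real.mul_rpow (by positivity) (by positivity), ← Real.rpow_mul (by positivity),
    one_div_mul_cancel hp.ne', Real.rpow_one]
  convert lintegral_rpow_le_of_hasWeakTypeSimple hA h₁ h₂ hp₁ hp₁p hpp₂ hM₁.le hM₂.le hσ f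
    using 3
  rw [← mul_div_assoc, ← mul_div_assoc, hσ₁, hσ₂]
  ring

end Interpolation

theorem marcinkiewicz_interpolation_general (p₁ p₂ p θ : ℝ) (hp₁ : 1 ≤ p₁) (hp₁p : p₁ < p)
    (hpp₂ : p < p₂) (hpθ : 1 / p = (1 - θ) / p₁ + θ / p₂) :
    ∃ C > (0 : ℝ), ∀ {α β : Type} [MeasurableSpace α] [MeasurableSpace β]
      (μ : Measure α) (ν : Measure β), SigmaFinite μ → SigmaFinite ν →
      ∀ (A : SimpleFunc α ℂ → β → ℂ),
      (∀ f g : SimpleFunc α ℂ, ∀ x, ‖A (f + g) x‖ ≤ ‖A f x‖ + ‖A g x‖) →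
      (∀ (c : ℂ) (f : SimpleFunc α ℂ) (x), ‖A (c • f) x‖ = ‖c‖ * ‖A f x‖) →
      ∀ (M₁ M₂ : ℝ), 0 < M₁ → 0 < M₂ →
      (∀ (f : SimpleFunc α ℂ) (y : ℝ), 0 < y →
        ν {x | y < ‖A f x‖} ≤
          (ENNReal.ofReal (M₁ / y) * eLpNorm (⇑f) (ENNReal.ofReal p₁) μ) ^ p₁) →
      (∀ (f : SimpleFunc α ℂ) (y : ℝ), 0 < y →
        ν {x | y < ‖A f x‖} ≤
          (ENNReal.ofReal (M₂ / y) * eLpNorm (⇑f) (ENNReal.ofReal p₂) μ) ^ p₂) →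
      ∀ f : SimpleFunc α ℂ,
        eLpNorm (A f) (ENNReal.ofReal p) ν ≤
          ENNReal.ofReal (C * M₁ ^ (1 - θ) * M₂ ^ θ) *
            eLpNorm (⇑f) (ENNReal.ofReal p) μ := by
  have hp₁_pos : 0 < p₁ := zero_lt_one.trans_le hp₁
  refine ⟨marcinkiewiczConst p₁ p₂ p, marcinkiewiczConst_pos (hp₁_pos.trans hp₁p) hp₁p hpp₂, ?_⟩
  intro α β _ _ μ ν _ _ A hA _ M₁ M₂ hM₁ hM₂ h₁ h₂ f
  exact eLpNorm_le_of_hasWeakTypeSimple hA h₁ h₂ hp₁_pos hp₁p hpp₂ hpθ hM₁ hM₂ f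

/-- Marcinkiewicz interpolation theorem: a sublinear operator `A`, defined on simple
functions on a σ-finite measure space `(α, μ)` with values in measurable functions on a
σ-finite measure space `(β, ν)`, which is of weak type `(p₁,p₁)` with constant `M₁` and of
weak type `(p₂,p₂)` with constant `M₂` (`1 ≤ p₁ < p < p₂ < ∞`), is of strong type `(p,p)`
with constant `C·M₁^{1−θ}·M₂^θ` where `1/p = (1−θ)/p₁ + θ/p₂` and `C = C(p,p₁,p₂)`. -/
theorem marcinkiewicz_interpolation (p₁ p₂ p θ : ℝ) (hp₁ : 1 ≤ p₁) (hp₁p : p₁ < p)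
    (hpp₂ : p < p₂) (hθ0 : 0 < θ) (hθ1 : θ < 1) (hpθ : 1 / p = (1 - θ) / p₁ + θ / p₂) :
    ∃ C > (0 : ℝ), ∀ {α β : Type} [MeasurableSpace α] [MeasurableSpace β]
      (μ : Measure α) (ν : Measure β), SigmaFinite μ → SigmaFinite ν →
      ∀ (A : SimpleFunc α ℂ → β → ℂ),
      (∀ f g : SimpleFunc α ℂ, ∀ x, ‖A (f + g) x‖ ≤ ‖A f x‖ + ‖A g x‖) →
      (∀ (c : ℂ) (f : SimpleFunc α ℂ) (x), ‖A (c • f) x‖ = ‖c‖ * ‖A f x‖) →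
      ∀ (M₁ M₂ : ℝ), 0 < M₁ → 0 < M₂ →
      (∀ (f : SimpleFunc α ℂ) (y : ℝ), 0 < y →
        ν {x | y < ‖A f x‖} ≤
          (ENNReal.ofReal (M₁ / y) * eLpNorm (⇑f) (ENNReal.ofReal p₁) μ) ^ p₁) →
      (∀ (f : SimpleFunc α ℂ) (y : ℝ), 0 < y →
        ν {x | y < ‖A f x‖} ≤
          (ENNReal.ofReal (M₂ / y) * eLpNorm (⇑f) (ENNReal.ofReal p₂) μ) ^ p₂) →
      ∀ f : SimpleFunc α ℂ,
        eLpNorm (A f) (ENNReal.ofReal p) ν ≤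
          ENNReal.ofReal (C * M₁ ^ (1 - θ) * M₂ ^ θ) *
            eLpNorm (⇑f) (ENNReal.ofReal p) μ :=
  marcinkiewicz_interpolation_general p₁ p₂ p θ hp₁ hp₁p hpp₂ hpθ
end

section
/- Let φ : ℕ → (0,∞) be a sequence and w : ℕ → (0,∞) a weight sequence with M_φ := sup_{t>0} t·Σ_{n : φ(n) ≥ t} w(n) < ∞. Then Σ_{n : φ(n) ≤ v} φ(n)²·w(n) ≤ 2·M_φ·v for every v > 0. -/
open ENNReal
open MeasureTheory

/-- Layer-cake estimate: if `M_φ = sup_{t>0} t·Σ_{n : φ(n) ≥ t} w(n) < ∞`, then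
`Σ_{n : φ(n) ≤ v} φ(n)²·w(n) ≤ 2·M_φ·v` for every `v > 0`. -/
theorem layer_cake_estimate (φ w : ℕ → ℝ) (hφ : ∀ n, 0 < φ n) (hw : ∀ n, 0 < w n)
    (M : ℝ) (hM : 0 ≤ M)
    (hMφ : ∀ t : ℝ, 0 < t →
      ENNReal.ofReal t *
        ∑' n : ℕ, Set.indicator {n : ℕ | t ≤ φ n} (fun n => ENNReal.ofReal (w n)) n ≤
        ENNReal.ofReal M)
    (v : ℝ) (hv : 0 < v) :
    ∑' n : ℕ, Set.indicator {n : ℕ | φ n ≤ v}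
        (fun n => ENNReal.ofReal (φ n ^ 2 * w n)) n ≤
      ENNReal.ofReal (2 * M * v) := by
  set μ : Measure ℕ := Measure.count.withDensity fun n => ENNReal.ofReal (w n) with hμ
  set f : ℕ → ℝ := fun n => if φ n ≤ v then φ n else 0 with hf
  have f_nn : 0 ≤ f := by
    intro n; simp only [hf]; split <;> [exact (hφ n).le; exact le_rfl]
  -- step 1: rewrite LHS as lintegral of f^2 against μ
  have step1 : ∑' n : ℕ, Set.indicator {n : ℕ | φ n ≤ v}
        (fun n => ENNReal.ofReal (φ n ^ 2 * w n)) n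
      = ∫⁻ n, ENNReal.ofReal (f n ^ 2) ∂μ := by
    rw [hμ, lintegral_withDensity_eq_lintegral_mul _ (by measurability) (by measurability),
      lintegral_count]
    refine tsum_congr fun n => ?_
    by_cases h : φ n ≤ v
    · simp only [Set.indicator_of_mem (by exact h : n ∈ {n | φ n ≤ v}), hf, if_pos h,
        Pi.mul_apply, ENNReal.ofReal_mul (sq_nonneg (φ n)), mul_comm,
        ENNReal.ofReal_mul (hw n).le]
    · simp [Set.indicator_of_notMem (by exact h : n ∉ {n | φ n ≤ v}), hf, if_neg h]
  -- μ of sets as tsums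
  have hμset : ∀ S : Set ℕ, μ S = ∑' n, S.indicator (fun n => ENNReal.ofReal (w n)) n := by
    intro S
    rw [hμ, withDensity_apply _ (MeasurableSet.of_discrete),
      ← lintegral_indicator MeasurableSet.of_discrete, lintegral_count]
  -- step 2: layer cake with g t = 2t
  have step2 : ∫⁻ n, ENNReal.ofReal (f n ^ 2) ∂μ
      = ∫⁻ t in Set.Ioi (0:ℝ), μ {n : ℕ | t ≤ f n} * ENNReal.ofReal (2 * t) := by
    have := lintegral_comp_eq_lintegral_meas_le_mul_of_measurable μ
      f_nn (by measurability) (g := fun t => 2 * t)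
      (fun t _ => (continuous_const.mul continuous_id).intervalIntegrable 0 t)
      (measurable_const.mul measurable_id) (fun t ht => by positivity)
    · rw [← this]
      congr 1
      ext n
      congr 1
      rw [intervalIntegral.integral_const_mul, integral_id]
      ring
  rw [step1, step2]
  -- step 3: bound the t-integral
  have bound : ∀ t ∈ Set.Ioi (0:ℝ),
      μ {n : ℕ | t ≤ f n} * ENNReal.ofReal (2 * t)
        ≤ (Set.Iic v).indicator (fun _ => ENNReal.ofReal (2 * M)) t := by
    intro t ht
    simp only [Set.mem_Ioi] at ht
    by_cases htv : t ≤ v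
    · rw [Set.indicator_of_mem (Set.mem_Iic.mpr htv)]
      have hsub : {n : ℕ | t ≤ f n} ⊆ {n : ℕ | t ≤ φ n} := by
        intro n hn
        simp only [Set.mem_setOf_eq, hf] at hn ⊢
        by_cases h : φ n ≤ v
        · simpa [if_pos h] using hn
        · simp only [if_neg h] at hn; linarith
      calc μ {n : ℕ | t ≤ f n} * ENNReal.ofReal (2 * t)
          ≤ μ {n : ℕ | t ≤ φ n} * ENNReal.ofReal (2 * t) :=
            mul_le_mul_left (measure_mono hsub) _
        _ = ENNReal.ofReal 2 * (ENNReal.ofReal t * μ {n : ℕ | t ≤ φ n}) := by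
            rw [ENNReal.ofReal_mul (by norm_num)]; ring
        _ ≤ ENNReal.ofReal 2 * ENNReal.ofReal M := by
            refine mul_le_mul_right ?_ _
            rw [hμset]; exact hMφ t ht
        _ = ENNReal.ofReal (2 * M) := by rw [← ENNReal.ofReal_mul (by norm_num)]
    · rw [Set.indicator_of_notMem (by simpa using htv)]
      have : {n : ℕ | t ≤ f n} = ∅ := by
        ext n
        simp only [Set.mem_setOf_eq, Set.mem_empty_iff_false, iff_false, not_le, hf]
        split <;> linarith
      simp [this]
  calc ∫⁻ t in Set.Ioi (0:ℝ), μ {n : ℕ | t ≤ f n} * ENNReal.ofReal (2 * t)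
      ≤ ∫⁻ t in Set.Ioi (0:ℝ), (Set.Iic v).indicator (fun _ => ENNReal.ofReal (2 * M)) t :=
        setLIntegral_mono (by measurability) bound
    _ = ENNReal.ofReal (2 * M) * volume (Set.Iic v ∩ Set.Ioi 0) := by
        rw [lintegral_indicator measurableSet_Iic, Measure.restrict_restrict measurableSet_Iic,
          setLIntegral_const]
    _ = ENNReal.ofReal (2 * M * v) := by
        rw [Set.Iic_inter_Ioi, Real.volume_Ioc, ← ENNReal.ofReal_mul (by positivity)]
        norm_num
end

section
/- Let w : ℕ → (0,∞), φ : ℕ → (0,∞) with M_φ := sup_{t>0} t·Σ_{n : φ(n) ≥ t} w(n) < ∞. Define the measure ν on ℕ by ν({n}) = φ(n)²·w(n). Suppose a : ℕ → ℂ satisfies |a(n)| ≤ B/φ(n) for all n (some constant B > 0). Then for every y > 0, ν{n : |a(n)| > y} ≤ 2·M_φ·B/y. -/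
open ENNReal MeasureTheory Set

/-!
Layer cake: `φ(n)² w(n) = ∫₀^{φ(n)} 2t w(n) dt`, and every point of the level set has
`φ(n) ≤ B / y` because `|a(n)| ≤ B / φ(n)`. Summing over the level set and exchanging sum and
integral, the integrand at height `t ∈ (0, B/y]` is at most `2t · ∑_{φ(n) ≥ t} w(n) ≤ 2 M_φ`.
-/

lemma ofReal_sq_mul_eq_setLIntegral {s c : ℝ} (hs : 0 ≤ s) (hc : 0 ≤ c) :
    ENNReal.ofReal (s ^ 2 * c) =
      ∫⁻ t in Ioc 0 s, ENNReal.ofReal c * ENNReal.ofReal (2 * t) := by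
  have hpos : 0 ≤ᵐ[volume.restrict (Ioc 0 s)] fun t : ℝ => 2 * t :=
    (ae_restrict_iff' measurableSet_Ioc).mpr
      (.of_forall fun t ht => by simp only [Pi.zero_apply]; linarith [ht.1])
  rw [lintegral_const_mul _ (by fun_prop),
    ← ofReal_integral_eq_lintegral_ofReal
      (by fun_prop : Continuous fun t : ℝ => 2 * t).integrableOn_Ioc hpos,
    ← intervalIntegral.integral_of_le hs, intervalIntegral.integral_const_mul, integral_id,
    ← ENNReal.ofReal_mul hc]
  congr 1
  ring

lemma ofReal_sq_mul_eq_setLIntegral_indicator {s c T : ℝ} (hs : 0 ≤ s) (hsT : s ≤ T)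
    (hc : 0 ≤ c) :
    ENNReal.ofReal (s ^ 2 * c) =
      ∫⁻ t in Ioc 0 T,
        (Iic s).indicator (fun t => ENNReal.ofReal c * ENNReal.ofReal (2 * t)) t := by
  rw [lintegral_indicator measurableSet_Iic, Measure.restrict_restrict measurableSet_Iic,
    inter_comm, Ioc_inter_Iic, min_eq_right hsT, ofReal_sq_mul_eq_setLIntegral hs hc]

section

variable {ι : Type*} {φ w : ι → ℝ}

lemma tsum_indicator_Iic_le_two_mul {t M : ℝ}
    (hMφ : ENNReal.ofReal t * ∑' n, {n | t ≤ φ n}.indicator (fun n => ENNReal.ofReal (w n)) n ≤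
      ENNReal.ofReal M) :
    ∑' n, (Iic (φ n)).indicator (fun t => ENNReal.ofReal (w n) * ENNReal.ofReal (2 * t)) t ≤
      2 * ENNReal.ofReal M := by
  have hsplit : ∀ n, (Iic (φ n)).indicator
      (fun t => ENNReal.ofReal (w n) * ENNReal.ofReal (2 * t)) t =
      {n | t ≤ φ n}.indicator (fun n => ENNReal.ofReal (w n)) n * (2 * ENNReal.ofReal t) := by
    intro n
    by_cases h : t ≤ φ n <;> simp [h, ENNReal.ofReal_mul zero_le_two]
  simp_rw [hsplit, ENNReal.tsum_mul_right]
  calc _ = 2 * (ENNReal.ofReal t *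
          ∑' n, {n | t ≤ φ n}.indicator (fun n => ENNReal.ofReal (w n)) n) := by ring
    _ ≤ 2 * ENNReal.ofReal M := by gcongr

theorem tsum_indicator_ofReal_sq_mul_le [Countable ι] {M T : ℝ} {S : Set ι}
    (hφ : ∀ n, 0 ≤ φ n) (hw : ∀ n, 0 ≤ w n)
    (hMφ : ∀ t : ℝ, 0 < t → ENNReal.ofReal t *
      ∑' n, {n | t ≤ φ n}.indicator (fun n => ENNReal.ofReal (w n)) n ≤ ENNReal.ofReal M)
    (hS : ∀ n ∈ S, φ n ≤ T) :
    ∑' n, S.indicator (fun n => ENNReal.ofReal (φ n ^ 2 * w n)) n ≤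
      2 * ENNReal.ofReal M * ENNReal.ofReal T := by
  let F : ι → ℝ → ℝ≥0∞ := fun n =>
    (Iic (φ n)).indicator (fun t => ENNReal.ofReal (w n) * ENNReal.ofReal (2 * t))
  have hF : ∀ n, Measurable (F n) := fun n =>
    (by fun_prop : Measurable _).indicator measurableSet_Iic
  calc ∑' n, S.indicator (fun n => ENNReal.ofReal (φ n ^ 2 * w n)) n
      ≤ ∑' n, ∫⁻ t in Ioc 0 T, F n t := by
        refine ENNReal.tsum_le_tsum fun n => ?_
        by_cases hn : n ∈ S
        · rw [indicator_of_mem hn,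
            ofReal_sq_mul_eq_setLIntegral_indicator (hφ n) (hS n hn) (hw n)]
        · simp [hn]
    _ = ∫⁻ t in Ioc 0 T, ∑' n, F n t := (lintegral_tsum fun n => (hF n).aemeasurable).symm
    _ ≤ ∫⁻ _ in Ioc 0 T, 2 * ENNReal.ofReal M :=
        setLIntegral_mono measurable_const fun t ht =>
          tsum_indicator_Iic_le_two_mul (hMφ t ht.1)
    _ = 2 * ENNReal.ofReal M * ENNReal.ofReal T := by
        rw [setLIntegral_const, Real.volume_Ioc, sub_zero]

end

theorem weak_type_one_one_general (φ w : ℕ → ℝ) (hφ : ∀ n, 0 < φ n) (hw : ∀ n, 0 < w n)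
    (M : ℝ)
    (hMφ : ∀ t : ℝ, 0 < t →
      ENNReal.ofReal t *
        ∑' n : ℕ, Set.indicator {n : ℕ | t ≤ φ n} (fun n => ENNReal.ofReal (w n)) n ≤
        ENNReal.ofReal M)
    (a : ℕ → ℂ) (B : ℝ) (hB : 0 < B) (ha : ∀ n, ‖a n‖ ≤ B / φ n)
    (y : ℝ) (hy : 0 < y) :
    ∑' n : ℕ, Set.indicator {n : ℕ | y < ‖a n‖}
        (fun n => ENNReal.ofReal (φ n ^ 2 * w n)) n ≤
      ENNReal.ofReal (2 * M * B / y) := by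
  have hlevel : ∀ n ∈ {n | y < ‖a n‖}, φ n ≤ B / y := fun n hn => by
    have : y * φ n < B := (lt_div_iff₀ (hφ n)).mp (hn.trans_le (ha n))
    exact ((lt_div_iff₀' hy).mpr this).le
  calc _ ≤ 2 * ENNReal.ofReal M * ENNReal.ofReal (B / y) :=
        tsum_indicator_ofReal_sq_mul_le (fun n => (hφ n).le) (fun n => (hw n).le) hMφ hlevel
    _ = ENNReal.ofReal (2 * M * B / y) := by
        rw [mul_div_assoc, ENNReal.ofReal_mul' (div_pos hB hy).le,
          ENNReal.ofReal_mul zero_le_two, ENNReal.ofReal_ofNat]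

/-- Weak type (1,1) estimate: with `ν({n}) = φ(n)²·w(n)` and `|a(n)| ≤ B/φ(n)`,
one has `ν{n : |a(n)| > y} ≤ 2·M_φ·B/y` for every `y > 0`. -/
theorem weak_type_one_one (φ w : ℕ → ℝ) (hφ : ∀ n, 0 < φ n) (hw : ∀ n, 0 < w n)
    (M : ℝ) (hM : 0 ≤ M)
    (hMφ : ∀ t : ℝ, 0 < t →
      ENNReal.ofReal t *
        ∑' n : ℕ, Set.indicator {n : ℕ | t ≤ φ n} (fun n => ENNReal.ofReal (w n)) n ≤
        ENNReal.ofReal M)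
    (a : ℕ → ℂ) (B : ℝ) (hB : 0 < B) (ha : ∀ n, ‖a n‖ ≤ B / φ n)
    (y : ℝ) (hy : 0 < y) :
    ∑' n : ℕ, Set.indicator {n : ℕ | y < ‖a n‖}
        (fun n => ENNReal.ofReal (φ n ^ 2 * w n)) n ≤
      ENNReal.ofReal (2 * M * B / y) :=
  weak_type_one_one_general φ w hφ hw M hMφ a B hB ha y hy
end

section
/- Let 1 < p ≤ 2 and let (λ_m)_{m∈ℤ} be a sequence of positive reals with sup_{t>0} t·#{m ∈ ℤ : λ_m^{-1} ≥ t} < ∞, where # denotes counting measure. Then denoting M := sup_{t>0} t·#{m : λ_m^{-1} ≥ t}, for all f ∈ L^p(𝕋): (Σ_{m∈ℤ} |f̂(m)|^p λ_m^{-(2-p)})^{1/p} ≤ C·M^{(2−p)/p}·‖f‖_{L^p(𝕋)}. -/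
/-!
Put `ν = ∑ₘ λₘ⁻² δₘ` on `ℤ` and `(T g)(m) = λₘ |ĝ(m)|`, so that the left side is
`(∫ (T f)^p dν)^(1/p)`. `T` is sublinear and of weak type (2,2) with constant 1 by Bessel's
inequality. It is of weak type (1,1) with constant `2M`: since `|ĝ(m)| ≤ ‖g‖₁`, the set
`{T g > s}` lies in `{λ⁻¹ < ‖g‖₁ / s}`, and the weak-ℓ¹ bound `t · #{λ⁻¹ ≥ t} ≤ M` gives
`∑_{λₘ⁻¹ < r} λₘ⁻² ≤ 2 M r` (layer cake). Marcinkiewicz interpolation between the two, done by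
splitting `f` at height `M t` and integrating the level-`t` estimate against `t^(p-1) dt`,
gives the case `1 < p < 2`; `p = 2` is Bessel's inequality itself.
-/

open MeasureTheory ENNReal

instance : Fact ((0 : ℝ) < 1) := ⟨zero_lt_one⟩

open Set

theorem lintegral_Ioo_ofReal_rpow {q : ℝ} (hq : -1 < q) {a : ℝ} (ha : 0 ≤ a) :
    ∫⁻ t in Ioo 0 a, ENNReal.ofReal (t ^ q) = ENNReal.ofReal (a ^ (q + 1) / (q + 1)) := by
  have hint : IntegrableOn (fun t : ℝ => t ^ q) (Ioc 0 a) :=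
    (intervalIntegrable_iff_integrableOn_Ioc_of_le ha).1
      (intervalIntegral.intervalIntegrable_rpow' hq)
  rw [← ofReal_integral_eq_lintegral_ofReal (hint.mono_set Ioo_subset_Ioc_self)
      (ae_restrict_of_forall_mem measurableSet_Ioo fun t ht => Real.rpow_nonneg ht.1.le q),
    integral_Ioc_eq_integral_Ioo.symm, ← intervalIntegral.integral_of_le ha,
    integral_rpow (Or.inl hq), Real.zero_rpow (by linarith), sub_zero]

theorem lintegral_Ici_ofReal_rpow {q : ℝ} (hq : q < -1) {a : ℝ} (ha : 0 < a) :
    ∫⁻ t in Ici a, ENNReal.ofReal (t ^ q) = ENNReal.ofReal (-a ^ (q + 1) / (q + 1)) := by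
  rw [← setLIntegral_congr Ioi_ae_eq_Ici, ← integral_Ioi_rpow_of_lt hq ha,
    ofReal_integral_eq_lintegral_ofReal (integrableOn_Ioi_rpow_of_lt hq ha)
      (ae_restrict_of_forall_mem measurableSet_Ioi fun t ht =>
        Real.rpow_nonneg (ha.trans ht).le q)]

theorem setLIntegral_sq_lt_le_of_mul_meas_le {α : Type*} [MeasurableSpace α] (ρ : Measure α)
    {w : α → ℝ} (hw_nonneg : ∀ a, 0 ≤ w a) (hw : Measurable w) {M : ℝ} (hM : 0 ≤ M)
    (hweak : ∀ t : ℝ, 0 < t → ENNReal.ofReal t * ρ {a | t ≤ w a} ≤ ENNReal.ofReal M) (r : ℝ) :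
    ∫⁻ a in {a | w a < r}, ENNReal.ofReal (w a ^ 2) ∂ρ ≤ ENNReal.ofReal (2 * M * r) := by
  have h_level : ∀ t ∈ Ioi (0 : ℝ), ρ.restrict {a | w a < r} {a | t ≤ w a} *
      ENNReal.ofReal (t ^ ((2 : ℝ) - 1)) ≤ (Ioo 0 r).indicator (fun _ => ENNReal.ofReal M) t := by
    intro t (ht : 0 < t)
    rw [Measure.restrict_apply (measurableSet_le measurable_const hw),
      show (2 : ℝ) - 1 = 1 by norm_num, Real.rpow_one]
    rcases lt_or_ge t r with htr | htr
    · rw [indicator_of_mem (show t ∈ Ioo 0 r from ⟨ht, htr⟩), mul_comm]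
      exact (mul_le_mul_right (measure_mono inter_subset_left) _).trans (hweak t ht)
    · have : {a | t ≤ w a} ∩ {a | w a < r} = ∅ :=
        eq_empty_of_forall_notMem fun a ha => (ha.1.trans_lt ha.2).not_ge htr
      rw [this, measure_empty, zero_mul]
      exact zero_le
  calc ∫⁻ a in {a | w a < r}, ENNReal.ofReal (w a ^ 2) ∂ρ
      = ENNReal.ofReal 2 * ∫⁻ t in Ioi 0, ρ.restrict {a | w a < r} {a | t ≤ w a} *
          ENNReal.ofReal (t ^ ((2 : ℝ) - 1)) := by
        simp_rw [← Real.rpow_two]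
        exact lintegral_rpow_eq_lintegral_meas_le_mul _ (ae_of_all _ hw_nonneg)
          hw.aemeasurable two_pos
    _ ≤ ENNReal.ofReal 2 * ∫⁻ t in Ioi 0, (Ioo 0 r).indicator (fun _ => ENNReal.ofReal M) t :=
        mul_le_mul_right (setLIntegral_mono' measurableSet_Ioi h_level) _
    _ = ENNReal.ofReal (2 * M * r) := by
        rw [lintegral_indicator measurableSet_Ioo, Measure.restrict_restrict measurableSet_Ioo,
          Ioo_inter_Ioi, setLIntegral_const, Real.volume_Ioo, max_self, sub_zero,
          ← ENNReal.ofReal_mul hM, ← ENNReal.ofReal_mul zero_le_two, mul_assoc]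

/-- Integrand, at a point where `‖f‖ = a`, of `t^(p-1)` times the weak-type bounds at level `t / 2`
for the parts of `f` above height `c t` (weak (1,1), constant `A₁`) and below it (weak (2,2),
constant `A₂`). -/
noncomputable def marcinkiewiczKernel (p A₁ A₂ c t a : ℝ) : ℝ :=
  if c * t < a then 2 * A₁ * a * t ^ (p - 2) else 4 * A₂ ^ 2 * a ^ 2 * t ^ (p - 3)

theorem measurable_marcinkiewiczKernel (p A₁ A₂ c : ℝ) :
    Measurable (Function.uncurry (marcinkiewiczKernel p A₁ A₂ c)) := by
  unfold marcinkiewiczKernel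
  refine Measurable.ite (measurableSet_lt (by fun_prop) (by fun_prop)) ?_ ?_ <;> fun_prop

theorem setLIntegral_Ioo_marcinkiewiczKernel {p A₁ A₂ c a : ℝ} (hp1 : 1 < p) (hA₁ : 0 ≤ A₁)
    (hc : 0 < c) (ha : 0 < a) :
    ∫⁻ t in Ioo 0 (a / c), ENNReal.ofReal (marcinkiewiczKernel p A₁ A₂ c t a) =
      ENNReal.ofReal (2 * A₁ * c ^ (1 - p) / (p - 1) * a ^ p) := by
  have h_eq : EqOn (fun t => ENNReal.ofReal (marcinkiewiczKernel p A₁ A₂ c t a))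
      (fun t => ENNReal.ofReal (2 * A₁ * a) * ENNReal.ofReal (t ^ (p - 2))) (Ioo 0 (a / c)) :=
    fun t ht => by
      dsimp only [marcinkiewiczKernel]
      rw [if_pos (by have := (lt_div_iff₀ hc).1 ht.2; linarith),
        ENNReal.ofReal_mul (by positivity)]
  have h_pow : a * (a / c) ^ (p - 1) = c ^ (1 - p) * a ^ p := by
    rw [Real.div_rpow ha.le hc.le, Real.rpow_sub ha, Real.rpow_sub hc, Real.rpow_sub hc,
      Real.rpow_one, Real.rpow_one]
    field_simp
  have := sub_pos.2 hp1
  rw [setLIntegral_congr_fun measurableSet_Ioo h_eq, lintegral_const_mul' _ _ ofReal_ne_top,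
    lintegral_Ioo_ofReal_rpow (by linarith) (div_pos ha hc).le, show p - 2 + 1 = p - 1 by ring,
    ← ENNReal.ofReal_mul (by positivity), mul_div_assoc', mul_assoc, h_pow]
  ring_nf

theorem setLIntegral_Ici_marcinkiewiczKernel {p A₁ A₂ c a : ℝ} (hp2 : p < 2) (hc : 0 < c)
    (ha : 0 < a) :
    ∫⁻ t in Ici (a / c), ENNReal.ofReal (marcinkiewiczKernel p A₁ A₂ c t a) =
      ENNReal.ofReal (4 * A₂ ^ 2 * c ^ (2 - p) / (2 - p) * a ^ p) := by
  have h_eq : EqOn (fun t => ENNReal.ofReal (marcinkiewiczKernel p A₁ A₂ c t a))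
      (fun t => ENNReal.ofReal (4 * A₂ ^ 2 * a ^ 2) * ENNReal.ofReal (t ^ (p - 3)))
      (Ici (a / c)) :=
    fun t ht => by
      dsimp only [marcinkiewiczKernel]
      rw [if_neg (by rw [mem_Ici, div_le_iff₀ hc] at ht; linarith),
        ENNReal.ofReal_mul (by positivity)]
  have h_pow : a ^ 2 * (a / c) ^ (p - 2) = c ^ (2 - p) * a ^ p := by
    rw [Real.div_rpow ha.le hc.le, Real.rpow_sub ha, Real.rpow_sub hc, Real.rpow_sub hc,
      Real.rpow_two, Real.rpow_two]
    field_simp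
  have := sub_pos.2 hp2
  rw [setLIntegral_congr_fun measurableSet_Ici h_eq, lintegral_const_mul' _ _ ofReal_ne_top,
    lintegral_Ici_ofReal_rpow (by linarith) (div_pos ha hc), show p - 3 + 1 = p - 2 by ring,
    neg_div, ← div_neg, neg_sub, ← ENNReal.ofReal_mul (by positivity), mul_div_assoc', mul_assoc,
    h_pow]
  ring_nf

theorem lintegral_marcinkiewiczKernel {p A₁ A₂ c a : ℝ} (hp1 : 1 < p) (hp2 : p < 2)
    (hA₁ : 0 ≤ A₁) (hc : 0 < c) (ha : 0 ≤ a) :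
    ∫⁻ t in Ioi 0, ENNReal.ofReal (marcinkiewiczKernel p A₁ A₂ c t a) =
      ENNReal.ofReal ((2 * A₁ * c ^ (1 - p) / (p - 1) + 4 * A₂ ^ 2 * c ^ (2 - p) / (2 - p)) *
        a ^ p) := by
  rcases ha.eq_or_lt with rfl | ha
  · rw [Real.zero_rpow (by linarith), mul_zero, ENNReal.ofReal_zero,
      setLIntegral_congr_fun measurableSet_Ioi (g := fun _ => 0) fun t ht => ?_, lintegral_zero]
    simp [marcinkiewiczKernel, (mul_pos hc ht).not_gt]
  have := sub_pos.2 hp1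
  have := sub_pos.2 hp2
  rw [← Ioo_union_Ici_eq_Ioi (div_pos ha hc), lintegral_union measurableSet_Ici
      ((Iio_disjoint_Ici le_rfl).mono_left Ioo_subset_Iio_self),
    setLIntegral_Ioo_marcinkiewiczKernel hp1 hA₁ hc ha,
    setLIntegral_Ici_marcinkiewiczKernel hp2 hc ha,
    ← ENNReal.ofReal_add (by positivity) (by positivity), add_mul]

theorem ofReal_marcinkiewiczKernel_norm_eq {X E : Type*} [NormedAddCommGroup E]
    {p A₁ A₂ c t : ℝ} (hA₁ : 0 ≤ A₁) (ht : 0 < t) (f : X → E) (x : X) :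
    ENNReal.ofReal (2 * A₁ * t ^ (p - 2)) * ‖{x | c * t < ‖f x‖}.indicator f x‖ₑ +
        ENNReal.ofReal (4 * A₂ ^ 2 * t ^ (p - 3)) * ‖{x | c * t < ‖f x‖}ᶜ.indicator f x‖ₑ ^ 2 =
      ENNReal.ofReal (marcinkiewiczKernel p A₁ A₂ c t ‖f x‖) := by
  set S := {x | c * t < ‖f x‖}
  by_cases hx : x ∈ S
  · rw [marcinkiewiczKernel, if_pos (show c * t < ‖f x‖ from hx), indicator_of_mem hx,
      indicator_of_notMem (notMem_compl_iff.2 hx), enorm_zero, zero_pow two_ne_zero, mul_zero,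
      add_zero, ← ofReal_norm, ← ENNReal.ofReal_mul (by positivity)]
    ring_nf
  · rw [marcinkiewiczKernel, if_neg (show ¬c * t < ‖f x‖ from hx), indicator_of_notMem hx,
      indicator_of_mem (mem_compl hx), enorm_zero, mul_zero, zero_add, ← ofReal_norm,
      ← ENNReal.ofReal_pow (norm_nonneg _), ← ENNReal.ofReal_mul (by positivity)]
    ring_nf

section Marcinkiewicz

variable {X Y E : Type*} [MeasurableSpace X] [MeasurableSpace Y] [NormedAddCommGroup E]

structure IsSublinearWeakTypeOneTwo (T : (X → E) → Y → ℝ) (μ : Measure X) (ν : Measure Y)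
    (A₁ A₂ : ℝ) : Prop where
  subadditive : ∀ g h, Integrable g μ → Integrable h μ → ∀ y, T (g + h) y ≤ T g y + T h y
  weakType_one : ∀ g, Integrable g μ → ∀ s, 0 < s →
    ν {y | s < T g y} ≤ ENNReal.ofReal (A₁ / s) * ∫⁻ x, ‖g x‖ₑ ∂μ
  weakType_two : ∀ g, Integrable g μ → ∀ s, 0 < s →
    ν {y | s < T g y} ≤ ENNReal.ofReal ((A₂ / s) ^ 2) * ∫⁻ x, ‖g x‖ₑ ^ 2 ∂μ

variable {T : (X → E) → Y → ℝ} {μ : Measure X} {ν : Measure Y} {A₁ A₂ : ℝ}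

theorem IsSublinearWeakTypeOneTwo.meas_lt_mul_rpow_le
    (hT : IsSublinearWeakTypeOneTwo T μ ν A₁ A₂) (hA₁ : 0 ≤ A₁) (p : ℝ) {c : ℝ} {f : X → E}
    (hfm : StronglyMeasurable f) (hfi : Integrable f μ) {t : ℝ} (ht : 0 < t) :
    ν {y | t < T f y} * ENNReal.ofReal (t ^ (p - 1)) ≤
      ∫⁻ x, ENNReal.ofReal (marcinkiewiczKernel p A₁ A₂ c t ‖f x‖) ∂μ := by
  set S := {x | c * t < ‖f x‖}
  have hS : MeasurableSet S := measurableSet_lt measurable_const hfm.norm.measurable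
  set g₁ := S.indicator f
  set g₂ := Sᶜ.indicator f
  have hsplit : {y | t < T f y} ⊆ {y | t / 2 < T g₁ y} ∪ {y | t / 2 < T g₂ y} := by
    intro y (hy : t < T f y)
    have := hT.subadditive g₁ g₂ (hfi.indicator hS) (hfi.indicator hS.compl) y
    rw [indicator_self_add_compl] at this
    rcases lt_or_ge (t / 2) (T g₁ y) with h | h
    · exact Or.inl h
    · exact Or.inr (show t / 2 < T g₂ y by linarith)
  have h_one : ENNReal.ofReal (A₁ / (t / 2)) * ENNReal.ofReal (t ^ (p - 1)) =
      ENNReal.ofReal (2 * A₁ * t ^ (p - 2)) := by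
    rw [← ENNReal.ofReal_mul (by positivity), show p - 2 = p - 1 - 1 by ring,
      Real.rpow_sub_one ht.ne' (p - 1)]
    congr 1
    field_simp
  have h_two : ENNReal.ofReal ((A₂ / (t / 2)) ^ 2) * ENNReal.ofReal (t ^ (p - 1)) =
      ENNReal.ofReal (4 * A₂ ^ 2 * t ^ (p - 3)) := by
    rw [← ENNReal.ofReal_mul (by positivity), show p - 3 = p - 1 - 2 by ring,
      Real.rpow_sub ht (p - 1) 2, Real.rpow_two]
    congr 1
    field_simp
    ring
  calc ν {y | t < T f y} * ENNReal.ofReal (t ^ (p - 1))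
      ≤ (ENNReal.ofReal (A₁ / (t / 2)) * ∫⁻ x, ‖g₁ x‖ₑ ∂μ +
          ENNReal.ofReal ((A₂ / (t / 2)) ^ 2) * ∫⁻ x, ‖g₂ x‖ₑ ^ 2 ∂μ) *
          ENNReal.ofReal (t ^ (p - 1)) := by
        gcongr
        exact (measure_mono hsplit).trans ((measure_union_le _ _).trans (add_le_add
          (hT.weakType_one _ (hfi.indicator hS) _ (half_pos ht))
          (hT.weakType_two _ (hfi.indicator hS.compl) _ (half_pos ht))))
    _ = ∫⁻ x, ENNReal.ofReal (2 * A₁ * t ^ (p - 2)) * ‖g₁ x‖ₑ +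
          ENNReal.ofReal (4 * A₂ ^ 2 * t ^ (p - 3)) * ‖g₂ x‖ₑ ^ 2 ∂μ := by
        rw [lintegral_add_left ((hfm.indicator hS).enorm.const_mul _),
          lintegral_const_mul' _ _ ofReal_ne_top, lintegral_const_mul' _ _ ofReal_ne_top,
          ← h_one, ← h_two]
        ring
    _ = _ := lintegral_congr fun x => ofReal_marcinkiewiczKernel_norm_eq hA₁ ht f x

theorem IsSublinearWeakTypeOneTwo.lintegral_rpow_le [SFinite μ]
    (hT : IsSublinearWeakTypeOneTwo T μ ν A₁ A₂) (hA₁ : 0 ≤ A₁) {p c : ℝ} (hp1 : 1 < p)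
    (hp2 : p < 2) (hc : 0 < c) {f : X → E} (hfm : StronglyMeasurable f) (hfi : Integrable f μ)
    (hTf_nonneg : 0 ≤ᵐ[ν] T f) (hTf_meas : AEMeasurable (T f) ν) :
    ∫⁻ y, ENNReal.ofReal (T f y ^ p) ∂ν ≤
      ENNReal.ofReal
          (p * (2 * A₁ * c ^ (1 - p) / (p - 1) + 4 * A₂ ^ 2 * c ^ (2 - p) / (2 - p))) *
        ∫⁻ x, ‖f x‖ₑ ^ p ∂μ := by
  set C := 2 * A₁ * c ^ (1 - p) / (p - 1) + 4 * A₂ ^ 2 * c ^ (2 - p) / (2 - p)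
  have hC : 0 ≤ C := by
    have := sub_pos.2 hp1
    have := sub_pos.2 hp2
    positivity
  have h_meas : AEMeasurable (Function.uncurry fun t x =>
      ENNReal.ofReal (marcinkiewiczKernel p A₁ A₂ c t ‖f x‖)) ((volume.restrict (Ioi 0)).prod μ) :=
    ((measurable_marcinkiewiczKernel p A₁ A₂ c).comp (measurable_fst.prodMk
      (hfm.norm.measurable.comp measurable_snd))).ennreal_ofReal.aemeasurable
  calc ∫⁻ y, ENNReal.ofReal (T f y ^ p) ∂ν
      = ENNReal.ofReal p * ∫⁻ t in Ioi 0, ν {y | t < T f y} * ENNReal.ofReal (t ^ (p - 1)) :=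
        lintegral_rpow_eq_lintegral_meas_lt_mul ν hTf_nonneg hTf_meas (by linarith)
    _ ≤ ENNReal.ofReal p * ∫⁻ t in Ioi 0, ∫⁻ x,
          ENNReal.ofReal (marcinkiewiczKernel p A₁ A₂ c t ‖f x‖) ∂μ := by
        refine mul_le_mul_right (setLIntegral_mono' measurableSet_Ioi fun t ht => ?_) _
        exact hT.meas_lt_mul_rpow_le hA₁ p hfm hfi ht
    _ = ENNReal.ofReal p * ∫⁻ x, ENNReal.ofReal (C * ‖f x‖ ^ p) ∂μ := by
        rw [lintegral_lintegral_swap h_meas]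
        simp_rw [lintegral_marcinkiewiczKernel hp1 hp2 hA₁ hc (norm_nonneg _)]
        rfl
    _ = ENNReal.ofReal (p * C) * ∫⁻ x, ‖f x‖ₑ ^ p ∂μ := by
        rw [ENNReal.ofReal_mul (by linarith), mul_assoc,
          ← lintegral_const_mul' (ENNReal.ofReal C) _ ofReal_ne_top]
        refine congrArg _ (lintegral_congr fun x => ?_)
        rw [ENNReal.ofReal_mul hC, ← ofReal_norm,
          ENNReal.ofReal_rpow_of_nonneg (norm_nonneg _) (by linarith : 0 ≤ p)]

end Marcinkiewicz

section FourierCoeff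

open AddCircle

variable {T : ℝ} [Fact (0 < T)]

theorem norm_fourierCoeff_le_integral_norm {E : Type*} [NormedAddCommGroup E] [NormedSpace ℂ E]
    (f : AddCircle T → E) (n : ℤ) : ‖fourierCoeff f n‖ ≤ ∫ x, ‖f x‖ ∂haarAddCircle := by
  refine (norm_integral_le_integral_norm _).trans_eq
    (integral_congr_ae (ae_of_all _ fun x => ?_))
  simp [norm_smul, fourier_apply, Circle.norm_coe]

theorem tsum_enorm_fourierCoeff_sq {f : AddCircle T → ℂ} (hf : MemLp f 2 haarAddCircle) :
    ∑' n, ‖fourierCoeff f n‖ₑ ^ 2 = ∫⁻ x, ‖f x‖ₑ ^ 2 ∂haarAddCircle := by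
  have h_ae := hf.coeFn_toLp
  have h_int : Integrable (fun x => ‖hf.toLp f x‖ ^ 2) haarAddCircle :=
    (memLp_two_iff_integrable_sq_norm (Lp.aestronglyMeasurable _)).1 (Lp.memLp _)
  simp_rw [← fourierCoeff_congr_ae h_ae, ← ofReal_norm, ← ENNReal.ofReal_pow (norm_nonneg _)]
  rw [← ENNReal.ofReal_tsum_of_nonneg (fun n => by positivity)
      (hasSum_sq_fourierCoeff (hf.toLp f)).summable, tsum_sq_fourierCoeff,
    ofReal_integral_eq_lintegral_ofReal h_int (ae_of_all _ fun x => by positivity)]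
  exact lintegral_congr_ae (h_ae.mono fun x hx => by simp only [hx])

theorem tsum_enorm_fourierCoeff_sq_le {f : AddCircle T → ℂ}
    (hf : AEStronglyMeasurable f haarAddCircle) :
    ∑' n, ‖fourierCoeff f n‖ₑ ^ 2 ≤ ∫⁻ x, ‖f x‖ₑ ^ 2 ∂haarAddCircle := by
  by_cases h : ∫⁻ x, ‖f x‖ₑ ^ 2 ∂haarAddCircle = ∞
  · exact h ▸ le_top
  refine (tsum_enorm_fourierCoeff_sq ⟨hf, ?_⟩).le
  rw [eLpNorm_lt_top_iff_lintegral_rpow_enorm_lt_top two_ne_zero ofNat_ne_top]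
  simpa [lt_top_iff_ne_top] using h

end FourierCoeff

section Paley

open AddCircle

noncomputable def paleyWeight (lam : ℤ → ℝ) : Measure ℤ :=
  Measure.count.withDensity fun m => ENNReal.ofReal ((lam m)⁻¹ ^ 2)

variable {lam : ℤ → ℝ} {M : ℝ}

theorem paleyWeight_apply (lam : ℤ → ℝ) (s : Set ℤ) :
    paleyWeight lam s = ∫⁻ m in s, ENNReal.ofReal ((lam m)⁻¹ ^ 2) ∂Measure.count :=
  withDensity_apply _ (.of_discrete)

theorem paleyWeight_setOf_lt_le_lintegral_enorm (hlam : ∀ m, 0 < lam m) (hM : 0 ≤ M)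
    (hcount : ∀ t : ℝ, 0 < t →
      ENNReal.ofReal t * Measure.count {m : ℤ | t ≤ (lam m)⁻¹} ≤ ENNReal.ofReal M)
    {g : AddCircle (1 : ℝ) → ℂ} (hg : Integrable g haarAddCircle) {s : ℝ} (hs : 0 < s) :
    paleyWeight lam {m | s < lam m * ‖fourierCoeff g m‖} ≤
      ENNReal.ofReal (2 * M / s) * ∫⁻ x, ‖g x‖ₑ ∂haarAddCircle := by
  set N := ∫ x, ‖g x‖ ∂haarAddCircle with hN
  have h_sub : {m | s < lam m * ‖fourierCoeff g m‖} ⊆ {m | (lam m)⁻¹ < N / s} := by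
    intro m (hm : s < lam m * ‖fourierCoeff g m‖)
    have := norm_fourierCoeff_le_integral_norm g m
    show (lam m)⁻¹ < N / s
    rw [inv_eq_one_div, div_lt_div_iff₀ (hlam m) hs]
    nlinarith [hlam m]
  calc paleyWeight lam {m | s < lam m * ‖fourierCoeff g m‖}
      ≤ paleyWeight lam {m | (lam m)⁻¹ < N / s} := measure_mono h_sub
    _ ≤ ENNReal.ofReal (2 * M * (N / s)) := by
        rw [paleyWeight_apply]
        exact setLIntegral_sq_lt_le_of_mul_meas_le _ (fun m => (inv_pos.2 (hlam m)).le)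
          .of_discrete hM hcount _
    _ = ENNReal.ofReal (2 * M / s) * ∫⁻ x, ‖g x‖ₑ ∂haarAddCircle := by
        rw [← ofReal_integral_norm_eq_lintegral_enorm hg, ← hN,
          ← ENNReal.ofReal_mul (by positivity)]
        ring_nf

theorem paleyWeight_setOf_lt_le_lintegral_enorm_sq {g : AddCircle (1 : ℝ) → ℂ}
    (hg : AEStronglyMeasurable g haarAddCircle) (hlam : ∀ m, 0 < lam m) {s : ℝ} (hs : 0 < s) :
    paleyWeight lam {m | s < lam m * ‖fourierCoeff g m‖} ≤
      ENNReal.ofReal ((1 / s) ^ 2) * ∫⁻ x, ‖g x‖ₑ ^ 2 ∂haarAddCircle := by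
  have h_pt : ∀ m ∈ {m | s < lam m * ‖fourierCoeff g m‖},
      ENNReal.ofReal ((lam m)⁻¹ ^ 2) ≤ ENNReal.ofReal ((1 / s) ^ 2) * ‖fourierCoeff g m‖ₑ ^ 2 := by
    intro m (hm : s < lam m * ‖fourierCoeff g m‖)
    rw [← ofReal_norm, ← ENNReal.ofReal_pow (norm_nonneg _),
      ← ENNReal.ofReal_mul (by positivity), ← mul_pow]
    refine ENNReal.ofReal_le_ofReal (pow_le_pow_left₀ (inv_pos.2 (hlam m)).le ?_ 2)
    rw [div_mul_eq_mul_div, one_mul, le_div_iff₀ hs, inv_mul_le_iff₀ (hlam m)]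
    exact hm.le
  calc paleyWeight lam {m | s < lam m * ‖fourierCoeff g m‖}
      ≤ ∫⁻ m, ENNReal.ofReal ((1 / s) ^ 2) * ‖fourierCoeff g m‖ₑ ^ 2 ∂Measure.count := by
        rw [paleyWeight_apply]
        exact (setLIntegral_mono' .of_discrete h_pt).trans (setLIntegral_le_lintegral _ _)
    _ ≤ ENNReal.ofReal ((1 / s) ^ 2) * ∫⁻ x, ‖g x‖ₑ ^ 2 ∂haarAddCircle := by
        rw [lintegral_count, ENNReal.tsum_mul_left]
        exact mul_le_mul_right (tsum_enorm_fourierCoeff_sq_le hg) _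

theorem isSublinearWeakTypeOneTwo_paleyWeight (hlam : ∀ m, 0 < lam m) (hM : 0 ≤ M)
    (hcount : ∀ t : ℝ, 0 < t →
      ENNReal.ofReal t * Measure.count {m : ℤ | t ≤ (lam m)⁻¹} ≤ ENNReal.ofReal M) :
    IsSublinearWeakTypeOneTwo
      (fun (g : AddCircle (1 : ℝ) → ℂ) m => lam m * ‖fourierCoeff g m‖) haarAddCircle
      (paleyWeight lam) (2 * M) 1 where
  subadditive g h hg hh m := by
    rw [← mul_add, fourierCoeff.add hg hh]
    exact mul_le_mul_of_nonneg_left (norm_add_le _ _) (hlam m).le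
  weakType_one g hg s hs := by
    simpa only [mul_div_assoc] using paleyWeight_setOf_lt_le_lintegral_enorm hlam hM hcount hg hs
  weakType_two g hg s hs := paleyWeight_setOf_lt_le_lintegral_enorm_sq hg.1 hlam hs

theorem lintegral_paleyWeight_rpow (hlam : ∀ m, 0 < lam m) {a : ℤ → ℝ} (ha : ∀ m, 0 ≤ a m)
    (p : ℝ) : ∫⁻ m, ENNReal.ofReal ((lam m * a m) ^ p) ∂paleyWeight lam =
      ∑' m, ENNReal.ofReal (a m ^ p * (lam m)⁻¹ ^ (2 - p)) := by
  rw [paleyWeight, lintegral_withDensity_eq_lintegral_mul _ .of_discrete .of_discrete,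
    lintegral_count]
  refine tsum_congr fun m => ?_
  have hl := hlam m
  rw [Pi.mul_apply, ← ENNReal.ofReal_mul (by positivity), Real.mul_rpow hl.le (ha m),
    Real.rpow_sub (inv_pos.2 hl), Real.rpow_two, Real.inv_rpow hl.le]
  congr 1
  field_simp

/-- At `p = 2` the term `4 / (2 - p)` is `4 / 0 = 0`; the `max` with `1` covers that case. -/
noncomputable def paleyConst (p : ℝ) : ℝ := max 1 (p * (4 / (p - 1) + 4 / (2 - p)))

theorem tsum_enorm_fourierCoeff_rpow_mul_le {p : ℝ} (hp1 : 1 < p) (hp2 : p ≤ 2)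
    (hlam : ∀ m, 0 < lam m) (hM : 0 < M)
    (hcount : ∀ t : ℝ, 0 < t →
      ENNReal.ofReal t * Measure.count {m : ℤ | t ≤ (lam m)⁻¹} ≤ ENNReal.ofReal M)
    {f : AddCircle (1 : ℝ) → ℂ} (hf : Integrable f haarAddCircle) :
    ∑' m, ‖fourierCoeff f m‖ₑ ^ p * ENNReal.ofReal ((lam m)⁻¹ ^ (2 - p)) ≤
      ENNReal.ofReal (paleyConst p * M ^ (2 - p)) * ∫⁻ x, ‖f x‖ₑ ^ p ∂haarAddCircle := by
  rcases hp2.eq_or_lt with rfl | hp2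
  · simp only [sub_self, Real.rpow_zero, ENNReal.ofReal_one, mul_one, ENNReal.rpow_two]
    exact (tsum_enorm_fourierCoeff_sq_le hf.1).trans
      (le_mul_of_one_le_left' (ENNReal.one_le_ofReal.2 (le_max_left _ _)))
  obtain ⟨g, hgm, hfg⟩ := hf.1
  rw [fourierCoeff_congr_ae hfg, lintegral_congr_ae (hfg.mono fun x hx => by rw [hx])]
  have h_const :
      p * (2 * (2 * M) * M ^ (1 - p) / (p - 1) + 4 * 1 ^ 2 * M ^ (2 - p) / (2 - p)) ≤
        paleyConst p * M ^ (2 - p) := by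
    have h_pow : M * M ^ (1 - p) = M ^ (2 - p) := by
      rw [← Real.rpow_one_add' hM.le (by linarith)]
      ring_nf
    calc _ = p * (4 / (p - 1) + 4 / (2 - p)) * M ^ (2 - p) := by
          rw [← h_pow]
          ring
      _ ≤ _ := mul_le_mul_of_nonneg_right (le_max_right _ _) (by positivity)
  calc ∑' m, ‖fourierCoeff g m‖ₑ ^ p * ENNReal.ofReal ((lam m)⁻¹ ^ (2 - p))
      = ∫⁻ m, ENNReal.ofReal ((lam m * ‖fourierCoeff g m‖) ^ p) ∂paleyWeight lam := by
        rw [lintegral_paleyWeight_rpow hlam (fun m => norm_nonneg _)]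
        refine tsum_congr fun m => ?_
        rw [← ofReal_norm, ENNReal.ofReal_rpow_of_nonneg (norm_nonneg _) (by linarith),
          ← ENNReal.ofReal_mul (by positivity)]
    _ ≤ _ := (isSublinearWeakTypeOneTwo_paleyWeight hlam hM.le hcount).lintegral_rpow_le
          (by positivity) hp1 hp2 hM hgm (hf.congr hfg)
          (ae_of_all _ fun m => mul_nonneg (hlam m).le (norm_nonneg _))
          Measurable.of_discrete.aemeasurable
    _ ≤ _ := mul_le_mul_left (ENNReal.ofReal_le_ofReal h_const) _

end Paley

/-- Paley inequality on the circle: for `1 < p ≤ 2`, positive `(λ_m)` with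
`M = sup_{t>0} t·#{m : λ_m⁻¹ ≥ t} < ∞`, one has
`(Σ_m |f̂(m)|^p λ_m^{−(2−p)})^{1/p} ≤ C·M^{(2−p)/p}·‖f‖_{L^p(𝕋)}`. -/
theorem paley_inequality_circle (p : ℝ) (hp1 : 1 < p) (hp2 : p ≤ 2) :
    ∃ C > (0 : ℝ), ∀ (lam : ℤ → ℝ), (∀ m, 0 < lam m) → ∀ (M : ℝ), 0 < M →
      (∀ t : ℝ, 0 < t →
        ENNReal.ofReal t * Measure.count {m : ℤ | t ≤ (lam m)⁻¹} ≤ ENNReal.ofReal M) →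
      ∀ f : AddCircle (1 : ℝ) → ℂ,
        MemLp f (ENNReal.ofReal p) AddCircle.haarAddCircle →
        (∑' m : ℤ, (‖fourierCoeff f m‖₊ : ℝ≥0∞) ^ p *
            ENNReal.ofReal ((lam m)⁻¹ ^ (2 - p))) ^ (1 / p) ≤
          ENNReal.ofReal (C * M ^ ((2 - p) / p)) *
            eLpNorm f (ENNReal.ofReal p) AddCircle.haarAddCircle := by
  have hp0 : 0 < p := by linarith
  have hK : 0 < paleyConst p := lt_max_of_lt_left one_pos
  refine ⟨paleyConst p ^ (1 / p), by positivity, fun lam hlam M hM hcount f hf => ?_⟩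
  have hf1 : Integrable f AddCircle.haarAddCircle :=
    hf.integrable (ENNReal.one_le_ofReal.2 hp1.le)
  calc _ ≤ (ENNReal.ofReal (paleyConst p * M ^ (2 - p)) *
          ∫⁻ x, ‖f x‖ₑ ^ p ∂AddCircle.haarAddCircle) ^ (1 / p) :=
        ENNReal.rpow_le_rpow (tsum_enorm_fourierCoeff_rpow_mul_le hp1 hp2 hlam hM hcount hf1)
          (by positivity)
    _ = _ := by
        rw [ENNReal.mul_rpow_of_nonneg _ _ (by positivity),
          ENNReal.ofReal_rpow_of_nonneg (by positivity) (by positivity),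
          Real.mul_rpow hK.le (by positivity), ← Real.rpow_mul hM.le,
          eLpNorm_eq_lintegral_rpow_enorm_toReal (by simpa) ofReal_ne_top,
          ENNReal.toReal_ofReal hp0.le, mul_one_div]
end
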